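/- arXiv:1707.03188 — 3 statements merged into one kernel-verified Lean document; each statement's English description precedes it below -/
import Mathlib

section
/- Let (L,v) be a henselian valued field and K ⊆ L a subfield, equipped with the restricted valuation (so the valuation ring of K is O_K = O_L ∩ K and the residue field Kv embeds into the residue field Lv). Assume K is relatively separably closed in L, i.e. every element of L that is separably algebraic over K lies in K. Then Kv is relatively separably closed in Lv: every element of Lv that is separably algebraic over (the image of) Kv lies in (the image of) Kv. -/
lemma coeff_mysum {R : Type} [CommRing R] (d k : ℕ) (a : ℕ → R) :
    (∑ n ∈ Finset.range (d+1), Polynomial.C (a n) * Polynomial.X ^ n).coeff k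
      = if k ≤ d then a k else 0 := by
  rw [Polynomial.finset_sum_coeff]
  simp only [Polynomial.coeff_C_mul, Polynomial.coeff_X_pow, mul_ite, mul_one, mul_zero]
  rw [Finset.sum_ite_eq (Finset.range (d+1)) k a]
  simp [Nat.lt_succ_iff]

/- STATEMENT 1: If `(L,v)` is a henselian valued field and `K` is a subfield which is
relatively separably closed in `L`, then the residue field of `K` (i.e. the image of
`O_L ∩ K` under the residue map) is relatively separably closed in the residue field of `L`.
An element is "separably algebraic over" a subfield/subset iff it is a root of a monic
separable polynomial with coefficients in it. -/
theorem residue_relSepClosed_of_relSepClosed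
    {L : Type} [Field L] (O : ValuationSubring L) [HenselianLocalRing O]
    (K : Subfield L)
    (hsc : ∀ x : L,
      (∃ P : Polynomial L, P.Monic ∧ P.Separable ∧ (∀ n, P.coeff n ∈ K) ∧
        Polynomial.eval x P = 0) → x ∈ K)
    (y : IsLocalRing.ResidueField O)
    (hy : ∃ Q : Polynomial (IsLocalRing.ResidueField O), Q.Monic ∧ Q.Separable ∧
      (∀ n, Q.coeff n ∈ IsLocalRing.residue O '' {a : O | (a : L) ∈ K}) ∧
      Polynomial.eval y Q = 0) :
    y ∈ IsLocalRing.residue O '' {a : O | (a : L) ∈ K} := by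
  classical
  obtain ⟨Q, hQm, hQsep, hQc, hQy⟩ := hy
  set d := Q.natDegree with hd
  choose c hc1 hc2 using hQc
  set a : ℕ → O := fun n => if n = d then 1 else c n with ha
  have haK : ∀ n, ((a n : L)) ∈ K := by
    intro n; by_cases h : n = d
    · simp only [ha, if_pos h, OneMemClass.coe_one]; exact one_mem K
    · simp only [ha, if_neg h]; exact hc1 n
  have hares : ∀ n, IsLocalRing.residue O (a n) = Q.coeff n := by
    intro n; by_cases h : n = d
    · subst h; simp only [ha, if_pos rfl, map_one]
      exact (hQm.coeff_natDegree).symm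
    · simp [ha, h, hc2 n]
  set P : Polynomial O := ∑ n ∈ Finset.range (d+1), Polynomial.C (a n) * Polynomial.X ^ n
    with hP
  have hPcoeff : ∀ k, P.coeff k = if k ≤ d then a k else 0 := fun k => coeff_mysum d k a
  have hPmap : P.map (IsLocalRing.residue O) = Q := by
    ext k
    rw [Polynomial.coeff_map, hPcoeff]
    by_cases h : k ≤ d
    · simp [h, hares k]
    · simp only [h, if_neg, ite_false, map_zero]
      exact (Polynomial.coeff_eq_zero_of_natDegree_lt (by omega)).symm
  have hPdeg : P.natDegree = d := by
    apply le_antisymm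
    · apply Polynomial.natDegree_le_iff_coeff_eq_zero.mpr
      intro m hm; rw [hPcoeff]; simp [Nat.not_le.mpr hm]
    · apply Polynomial.le_natDegree_of_ne_zero
      rw [hPcoeff]; simp [ha]
  have hPmon : P.Monic := by
    rw [Polynomial.Monic, Polynomial.leadingCoeff, hPdeg, hPcoeff]
    simp [ha]
  obtain ⟨a₀, ha₀⟩ := IsLocalRing.residue_surjective (R := O) y
  have keyres : ∀ (R : Polynomial O) (t : O),
      IsLocalRing.residue O (R.eval t)
        = (R.map (IsLocalRing.residue O)).eval (IsLocalRing.residue O t) := by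
    intro R t; rw [Polynomial.eval_map, Polynomial.eval₂_at_apply]
  have hQ'y : Polynomial.eval y (Polynomial.derivative Q) ≠ 0 := by
    obtain ⟨u, v, huv⟩ := hQsep
    intro h0
    have := congrArg (Polynomial.eval y) huv
    simp [hQy, h0] at this
  have hres_deriv : ∀ t : O, IsLocalRing.residue O t = y →
      IsLocalRing.residue O (P.derivative.eval t) ≠ 0 := by
    intro t ht
    rw [keyres, ← Polynomial.derivative_map, hPmap, ht]
    exact hQ'y
  have h1 : P.eval a₀ ∈ IsLocalRing.maximalIdeal O := by
    have : IsLocalRing.residue O (P.eval a₀) = 0 := by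
      rw [keyres, hPmap, ha₀, hQy]
    exact Ideal.Quotient.eq_zero_iff_mem.mp this
  have hunit : ∀ t : O, IsLocalRing.residue O t = y → IsUnit (P.derivative.eval t) := by
    intro t ht
    by_contra h
    exact hres_deriv t ht (Ideal.Quotient.eq_zero_iff_mem.mpr
      (IsLocalRing.mem_maximalIdeal _ |>.mpr h))
  obtain ⟨x, hx, hxa⟩ := HenselianLocalRing.is_henselian P hPmon a₀ h1 (hunit a₀ ha₀)
  have hxy : IsLocalRing.residue O x = y := by
    have h0 : IsLocalRing.residue O (x - a₀) = 0 := Ideal.Quotient.eq_zero_iff_mem.mpr hxa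
    rw [map_sub, sub_eq_zero] at h0
    rw [h0, ha₀]
  have h2x : IsUnit (P.derivative.eval x) := hunit x hxy
  -- Build the polynomial over K
  set b : ℕ → K := fun n => ⟨(a n : L), haK n⟩ with hb
  set PK : Polynomial K := ∑ n ∈ Finset.range (d+1), Polynomial.C (b n) * Polynomial.X ^ n
    with hPK
  have hPKcoeff : ∀ k, PK.coeff k = if k ≤ d then b k else 0 := fun k => coeff_mysum d k b
  have hmapeq : PK.map (algebraMap K L) = P.map (O.subtype) := by
    ext k
    rw [Polynomial.coeff_map, Polynomial.coeff_map, hPKcoeff, hPcoeff]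
    by_cases h : k ≤ d
    · simp only [if_pos h]; rfl
    · simp [h]
  set xL : L := (x : L) with hxL
  have hsubx : O.subtype x = xL := rfl
  have hevalmap : ∀ R : Polynomial O,
      Polynomial.eval xL (R.map O.subtype) = O.subtype (R.eval x) := by
    intro R
    rw [← hsubx, Polynomial.eval_map, Polynomial.eval₂_at_apply]
  have hevalP : Polynomial.aeval xL PK = 0 := by
    rw [Polynomial.aeval_def, ← Polynomial.eval_map, hmapeq, hevalmap, hx.eq_zero, map_zero]
  have hbd : b d = 1 := by
    apply Subtype.ext
    simp [hb, ha]
  have hPKmon : PK.Monic := by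
    have hdeg : PK.natDegree = d := by
      apply le_antisymm
      · apply Polynomial.natDegree_le_iff_coeff_eq_zero.mpr
        intro m hm; rw [hPKcoeff]; simp [Nat.not_le.mpr hm]
      · apply Polynomial.le_natDegree_of_ne_zero
        rw [hPKcoeff]; simp [hbd]
    rw [Polynomial.Monic, Polynomial.leadingCoeff, hdeg, hPKcoeff]
    simp [hbd]
  have hint : IsIntegral K xL :=
    ⟨PK, hPKmon, by rwa [Polynomial.aeval_def] at hevalP⟩
  set m := minpoly K xL with hm
  obtain ⟨g, hg⟩ := minpoly.dvd K xL hevalP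
  have hm' : Polynomial.derivative m ≠ 0 := by
    intro h0
    have hzero : Polynomial.aeval xL (Polynomial.derivative PK) = 0 := by
      rw [hg, Polynomial.derivative_mul, map_add, map_mul, map_mul, minpoly.aeval, ← hm, h0]
      simp
    have hval : Polynomial.aeval xL (Polynomial.derivative PK)
        = O.subtype (P.derivative.eval x) := by
      rw [Polynomial.aeval_def, ← Polynomial.eval_map, ← Polynomial.derivative_map, hmapeq,
        Polynomial.derivative_map, hevalmap]
    rw [hval] at hzero
    have : P.derivative.eval x = 0 := by
      change ((P.derivative.eval x : O) : L) = 0 at hzero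
      exact_mod_cast hzero
    exact h2x.ne_zero this
  have hmsep : m.Separable :=
    (Polynomial.separable_iff_derivative_ne_zero (minpoly.irreducible hint)).2 hm'
  have hxK : xL ∈ K := by
    apply hsc
    refine ⟨m.map (algebraMap K L), (minpoly.monic hint).map _, hmsep.map, ?_, ?_⟩
    · intro n
      rw [Polynomial.coeff_map]
      exact (m.coeff n).2
    · rw [Polynomial.eval_map, ← Polynomial.aeval_def, minpoly.aeval]
  exact ⟨x, hxK, hxy⟩
end

section
/- Let (F,v) be a henselian valued field whose residue field Fv has characteristic p > 0. Assume: (i) (F,v) is defectless, i.e. for every finite field extension L/F and every valuation w on L extending v one has [L:F] = (w(L^×) : v(F^×)) · [Lw : Fv], where (w(L^×) : v(F^×)) is the index of value groups and Lw is the residue field of w; (ii) the value group v(F^×) is p-divisible; (iii) every finite field extension of Fv has degree prime to p. Then every finite field extension of F has degree prime to p. -/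
open IsLocalRing

namespace Paper

variable {K L : Type} [Field K] [Field L]

/-- The ring homomorphism `A →+* B` induced by `f : K →+* L` when `B.comap f = A`. -/
def inducedHom (f : K →+* L) (A : ValuationSubring K) (B : ValuationSubring L)
    (h : B.comap f = A) : A →+* B where
  toFun a := ⟨f a, by
    have ha : (a : K) ∈ B.comap f := by rw [h]; exact a.2
    exact ValuationSubring.mem_comap.mp ha⟩
  map_one' := Subtype.ext (map_one f)
  map_mul' x y := Subtype.ext (map_mul f x.1 y.1)
  map_zero' := Subtype.ext (map_zero f)
  map_add' x y := Subtype.ext (map_add f x.1 y.1)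

theorem isLocalHom_inducedHom (f : K →+* L) (A : ValuationSubring K) (B : ValuationSubring L)
    (h : B.comap f = A) : IsLocalHom (inducedHom f A B h) := by
  constructor
  intro a ha
  have hane : (a : K) ≠ 0 := by
    intro h0
    have hz : (inducedHom f A B h) a = 0 := by
      apply Subtype.ext
      show f (a : K) = 0
      rw [h0, map_zero]
    rw [hz] at ha
    exact not_isUnit_zero ha
  have hinvB : f ((a : K)⁻¹) ∈ B := by
    obtain ⟨u, hu⟩ := ha
    have h1 : ((u⁻¹ : Bˣ) : B) * (inducedHom f A B h a) = 1 := by rw [← hu]; exact u.inv_mul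
    have h2 : (((u⁻¹ : Bˣ) : B) : L) * f (a : K) = 1 := congrArg Subtype.val h1
    have h3 : f ((a : K)⁻¹) = (((u⁻¹ : Bˣ) : B) : L) := by
      rw [map_inv₀]
      exact inv_eq_of_mul_eq_one_right (by rw [mul_comm]; exact h2)
    rw [h3]
    exact (((u⁻¹ : Bˣ) : B)).2
  have hinv : (a : K)⁻¹ ∈ A := by
    have hc : (a : K)⁻¹ ∈ B.comap f := ValuationSubring.mem_comap.mpr hinvB
    rwa [h] at hc
  apply IsUnit.of_mul_eq_one (a := a) ⟨(a : K)⁻¹, hinv⟩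
  apply Subtype.ext
  show (a : K) * (a : K)⁻¹ = 1
  exact mul_inv_cancel₀ hane

/-- Residue field map induced when `B.comap f = A`. -/
noncomputable def residueMap (f : K →+* L) (A : ValuationSubring K) (B : ValuationSubring L)
    (h : B.comap f = A) : ResidueField A →+* ResidueField B :=
  letI := isLocalHom_inducedHom f A B h
  ResidueField.map (inducedHom f A B h)

/-- The ramification index `(v(L^×) : v(K^×))` for an extension of valued fields:
the index of the subgroup of `Lˣ` generated by the image of `Kˣ` together with the
units of the valuation subring `B` of `L`. -/
noncomputable def ramIdx (f : K →+* L) (B : ValuationSubring L) : ℕ :=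
  ((Units.map f.toMonoidHom).range ⊔ B.unitGroup).index

/-- The residue degree `[Lv : Kv]` for an extension of valued fields. -/
noncomputable def resDeg (f : K →+* L) (A : ValuationSubring K) (B : ValuationSubring L)
    (h : B.comap f = A) : ℕ :=
  letI := (residueMap f A B h).toAlgebra
  Module.finrank (ResidueField A) (ResidueField B)

/-- A valued field `(K, A)` is defectless if for every finite field extension `L/K` and
every valuation subring `B` of `L` lying over `A`, the fundamental equality
`[L : K] = (v(L^×) : v(K^×)) · [Lv : Kv]` holds. -/
def IsDefectless (A : ValuationSubring K) : Prop :=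
  ∀ (L' : Type) [Field L'] [Algebra K L'] [FiniteDimensional K L']
    (B : ValuationSubring L') (h : B.comap (algebraMap K L') = A),
    Module.finrank K L' = ramIdx (algebraMap K L') B * resDeg (algebraMap K L') A B h

/-- The value group `v(K^×)` is `p`-divisible. -/
def PDivisibleValueGroup (p : ℕ) (A : ValuationSubring K) : Prop :=
  ∀ x : Kˣ, ∃ y : Kˣ, x / y ^ p ∈ A.unitGroup

/-- The valuation is roughly `p`-divisible: every `γ` with `-v(p) ≤ γ ≤ v(p)` lies in `pΓ`. -/
def RoughlyPDivisible (p : ℕ) (A : ValuationSubring K) : Prop :=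
  p ≠ 0 → ∀ x : Kˣ, ((p : K) * (x : K) ∈ A ∧ (p : K) / (x : K) ∈ A) →
    ∃ y : Kˣ, x / y ^ p ∈ A.unitGroup

/-- Every finite field extension of the residue field has degree prime to `p`. -/
def ResidueFiniteExtPrimeTo (p : ℕ) (A : ValuationSubring K) : Prop :=
  ∀ (k : Type) [Field k] [Algebra (ResidueField A) k] [FiniteDimensional (ResidueField A) k],
    Nat.Coprime p (Module.finrank (ResidueField A) k)

/-- `(K, A)` is a model of `T₁` with residue characteristic `p`. -/
def IsT1Model (p : ℕ) (A : ValuationSubring K) : Prop :=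
  HenselianLocalRing A ∧ IsDefectless A ∧ PerfectField K ∧ PerfectField (ResidueField A) ∧
    CharP (ResidueField A) p ∧ RoughlyPDivisible p A ∧ ResidueFiniteExtPrimeTo p A

end Paper

/-! Extend `v` to a valuation `w` on `L` (Chevalley). By defectlessness `[L : F] = e · f` with `e` the
ramification index and `f` the residue degree, and `f` is prime to `p` by hypothesis. The ramification
index is the order of the finite group `w(L^×)/v(F^×)`, which has no `p`-torsion: if `pγ ∈ v(F^×)`,
then `pγ = pδ` for some `δ ∈ v(F^×)` by `p`-divisibility, and `γ = δ` because value groups are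
torsion-free. -/

theorem Subgroup.coprime_index_of_pow_mem {G : Type*} [Group G] (H : Subgroup G)
    [H.Normal] [H.FiniteIndex] {p : ℕ} (hp : p.Prime) (h : ∀ g : G, g ^ p ∈ H → g ∈ H) :
    p.Coprime H.index := by
  have : Fact p.Prime := ⟨hp⟩
  rw [hp.coprime_iff_not_dvd, Subgroup.index]
  intro hdvd
  obtain ⟨q, hq⟩ := exists_prime_orderOf_dvd_card' p hdvd
  obtain ⟨g, rfl⟩ := QuotientGroup.mk_surjective q
  have hg : g ^ p ∈ H := by
    rw [← QuotientGroup.eq_one_iff, QuotientGroup.mk_pow, ← hq, pow_orderOf_eq_one]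
  rw [(QuotientGroup.eq_one_iff g).mpr (h g hg), orderOf_one] at hq
  exact hp.one_lt.ne hq

namespace ValuationSubring

variable {K L : Type*} [Field K] [Field L]

theorem mem_unitGroup_of_pow_mem (A : ValuationSubring K) {n : ℕ} (hn : n ≠ 0) {x : Kˣ}
    (hx : x ^ n ∈ A.unitGroup) : x ∈ A.unitGroup := by
  rwa [mem_unitGroup_iff, Units.val_pow_eq_pow_val, map_pow, pow_eq_one_iff_left hn] at hx

theorem mem_unitGroup_iff_mem_and_inv_mem (A : ValuationSubring K) (x : Kˣ) :
    x ∈ A.unitGroup ↔ (x : K) ∈ A ∧ (x : K)⁻¹ ∈ A := by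
  have hx : 0 < A.valuation x := A.valuation.pos_iff.mpr x.ne_zero
  rw [mem_unitGroup_iff, ← A.valuation_le_one_iff, ← A.valuation_le_one_iff,
    map_inv₀, inv_le_one₀ hx, le_antisymm_iff]

theorem units_map_mem_unitGroup (B : ValuationSubring L) (f : K →+* L)
    {x : Kˣ} (hx : x ∈ (B.comap f).unitGroup) : Units.map f.toMonoidHom x ∈ B.unitGroup := by
  rw [mem_unitGroup_iff_mem_and_inv_mem] at hx ⊢
  simpa [mem_comap] using hx

theorem exists_comap_eq (A : ValuationSubring K) (f : K →+* L) :
    ∃ B : ValuationSubring L, B.comap f = A := by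
  obtain ⟨B, hAB, hloc⟩ := IsLocalRing.exists_factor_valuationRing (f.comp A.subtype)
  refine ⟨B, le_antisymm (fun x hx => ?_) (fun x hx => hAB ⟨x, hx⟩)⟩
  by_contra hxA
  have hx0 : x ≠ 0 := by rintro rfl; exact hxA A.zero_mem
  have hinv : x⁻¹ ∈ A := (A.mem_or_inv_mem x).resolve_left hxA
  -- `f x⁻¹` is a unit of `B` with inverse `f x`, so locality makes `x⁻¹` a unit of `A`.
  have hunit : IsUnit (⟨x⁻¹, hinv⟩ : A) :=
    hloc.1 _ (IsUnit.of_mul_eq_one (⟨f x, hx⟩ : B.toSubring)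
      (Subtype.ext (by simp [hx0])))
  have hv := (A.valuation_eq_one_iff _).mp hunit
  rw [map_inv₀, inv_eq_one] at hv
  exact hxA (A.mem_of_valuation_le_one x hv.le)

end ValuationSubring

namespace Paper

variable {K L : Type} [Field K] [Field L]

theorem coprime_ramIdx {p : ℕ} (hp : p.Prime) {A : ValuationSubring K} {B : ValuationSubring L}
    {f : K →+* L} (hB : B.comap f = A) (hdiv : PDivisibleValueGroup p A)
    (hram : ramIdx f B ≠ 0) : p.Coprime (ramIdx f B) := by
  have : Subgroup.FiniteIndex ((Units.map f.toMonoidHom).range ⊔ B.unitGroup) := ⟨hram⟩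
  refine Subgroup.coprime_index_of_pow_mem _ hp fun u hu => ?_
  obtain ⟨_, ⟨x, rfl⟩, z, hz, hxz⟩ := Subgroup.mem_sup.mp hu
  obtain ⟨w, hw⟩ := hdiv x
  have hw' := B.units_map_mem_unitGroup f (hB ▸ hw)
  have hu' : u / Units.map f.toMonoidHom w ∈ B.unitGroup := by
    refine B.mem_unitGroup_of_pow_mem hp.ne_zero ?_
    have : (u / Units.map f.toMonoidHom w) ^ p = Units.map f.toMonoidHom (x / w ^ p) * z := by
      rw [div_pow, map_div, map_pow, ← hxz]
      exact mul_div_right_comm _ _ _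
    exact this ▸ B.unitGroup.mul_mem hw' hz
  simpa using Subgroup.mul_mem _ (Subgroup.mem_sup_right hu')
    (Subgroup.mem_sup_left (MonoidHom.mem_range.mpr ⟨w, rfl⟩ : Units.map f.toMonoidHom w ∈ _))

theorem coprime_resDeg {p : ℕ} {A : ValuationSubring K} {B : ValuationSubring L} {f : K →+* L}
    (hB : B.comap f = A) (hres : ResidueFiniteExtPrimeTo p A) (hdeg : resDeg f A B hB ≠ 0) :
    p.Coprime (resDeg f A B hB) := by
  let := (residueMap f A B hB).toAlgebra
  have : FiniteDimensional (ResidueField A) (ResidueField B) :=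
    FiniteDimensional.of_finrank_pos (Nat.pos_of_ne_zero hdeg)
  exact hres (ResidueField B)

theorem finite_ext_degree_prime_to_p_general
    {F : Type} [Field F] (A : ValuationSubring F)
    (p : ℕ) (hp : p.Prime)
    (hdef : IsDefectless A)
    (hdiv : PDivisibleValueGroup p A)
    (hres : ResidueFiniteExtPrimeTo p A) :
    ∀ (L : Type) [Field L] [Algebra F L] [FiniteDimensional F L],
      Nat.Coprime p (Module.finrank F L) := by
  intro L _ _ _
  obtain ⟨B, hB⟩ := A.exists_comap_eq (algebraMap F L)
  have hdeg := hdef L B hB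
  have hne : ramIdx (algebraMap F L) B * resDeg (algebraMap F L) A B hB ≠ 0 :=
    hdeg ▸ Module.finrank_pos.ne'
  rw [hdeg]
  exact (coprime_ramIdx hp hB hdiv (left_ne_zero_of_mul hne)).mul_right
    (coprime_resDeg hB hres (right_ne_zero_of_mul hne))

theorem finite_ext_degree_prime_to_p
    {F : Type} [Field F] (A : ValuationSubring F) [HenselianLocalRing A]
    (p : ℕ) (hp : p.Prime) [CharP (ResidueField A) p]
    (hdef : IsDefectless A)
    (hdiv : PDivisibleValueGroup p A)
    (hres : ResidueFiniteExtPrimeTo p A) :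
    ∀ (L : Type) [Field L] [Algebra F L] [FiniteDimensional F L],
      Nat.Coprime p (Module.finrank F L) :=
  finite_ext_degree_prime_to_p_general A p hp hdef hdiv hres

end Paper
end

section
/- Let (L',v') and (F',w') be valued fields equipped with angular component maps ac_{L'} : L' → L'v' and ac_{F'} : F' → F'w'. Let g : L' → F' be an isomorphism of valued fields (a ring isomorphism mapping the valuation ring of L' onto that of F'), and let ḡ : L'v' → F'w' be the induced isomorphism of residue fields. Let L ⊆ L' be a subfield with v'(L^×) = v'(L'^×), and assume that ḡ(ac_{L'}(x)) = ac_{F'}(g(x)) for all x ∈ L. Then ḡ(ac_{L'}(x)) = ac_{F'}(g(x)) for all x ∈ L'. -/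
namespace Paper

/-- An angular component map on a valued field `(K, A)`: it sends `0` to `0`, is a
multiplicative group homomorphism `K^× → (Kv)^×`, and agrees with the residue map on
elements of valuation `0` (units of the valuation ring). -/
structure IsAngularComponent {K : Type} [Field K] (A : ValuationSubring K)
    (ac : K → IsLocalRing.ResidueField A) : Prop where
  map_zero : ac 0 = 0
  map_mul : ∀ x y : K, x ≠ 0 → y ≠ 0 → ac (x * y) = ac x * ac y
  ne_zero : ∀ x : K, x ≠ 0 → ac x ≠ 0
  eq_residue : ∀ (x : K) (hx : x ∈ A), x⁻¹ ∈ A → ac x = IsLocalRing.residue A ⟨x, hx⟩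

/- STATEMENT 6: Let `g : L' → F'` be an isomorphism of valued fields with angular components,
`gbar` the induced residue field isomorphism, and `L ⊆ L'` a subfield with
`v'(L^×) = v'(L'^×)`. If `gbar ∘ ac = ac ∘ g` on `L`, then it holds on all of `L'`. -/
theorem angular_component_commutes_of_value_group_eq
    {L' F' : Type} [Field L'] [Field F']
    (A : ValuationSubring L') (B : ValuationSubring F')
    (acL : L' → IsLocalRing.ResidueField A) (acF : F' → IsLocalRing.ResidueField B)
    (hacL : IsAngularComponent A acL) (hacF : IsAngularComponent B acF)
    (g : L' ≃+* F') (hg : ∀ x : L', x ∈ A ↔ g x ∈ B)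
    (gbar : IsLocalRing.ResidueField A ≃+* IsLocalRing.ResidueField B)
    (hgbar : ∀ (x : L') (hx : x ∈ A),
      gbar (IsLocalRing.residue A ⟨x, hx⟩) = IsLocalRing.residue B ⟨g x, (hg x).1 hx⟩)
    (L : Subfield L')
    (hval : ∀ x : L', x ≠ 0 → ∃ y ∈ L, y ≠ 0 ∧ x / y ∈ A ∧ y / x ∈ A)
    (hK : ∀ x ∈ L, gbar (acL x) = acF (g x)) :
    ∀ x : L', gbar (acL x) = acF (g x) := by
  intro x
  by_cases hx : x = 0
  · simp [hx, hacL.map_zero, hacF.map_zero]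
  · obtain ⟨y, hyL, hy0, hxy, hyx⟩ := hval x hx
    have hxy0 : x / y ≠ 0 := div_ne_zero hx hy0
    have hinv : (x / y)⁻¹ ∈ A := by rwa [inv_div]
    have hx_eq : x = (x / y) * y := by field_simp
    have hgxy : g x = g (x / y) * g y := by
      conv_lhs => rw [hx_eq]
      rw [map_mul]
    have hgxy0 : g (x / y) ≠ 0 := by
      simpa using (map_ne_zero g.toRingHom).2 hxy0
    have hgy0 : g y ≠ 0 := by
      simpa using (map_ne_zero g.toRingHom).2 hy0
    have hgxyB : g (x / y) ∈ B := (hg _).1 hxy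
    have hgxyBinv : (g (x / y))⁻¹ ∈ B := by
      rw [← map_inv₀]; exact (hg _).1 hinv
    calc gbar (acL x) = gbar (acL (x / y) * acL y) := by
          conv_lhs => rw [hx_eq]
          rw [hacL.map_mul _ _ hxy0 hy0]
      _ = gbar (acL (x / y)) * gbar (acL y) := by rw [map_mul]
      _ = acF (g (x / y)) * acF (g y) := by
          rw [hK y hyL, hacL.eq_residue _ hxy hinv, hgbar _ hxy,
            ← hacF.eq_residue _ hgxyB hgxyBinv]
      _ = acF (g x) := by
          rw [hgxy, hacF.map_mul _ _ hgxy0 hgy0]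

end Paper
end
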